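/- Let X be any element of the even subalgebra of Cl₄ (i.e. X lies in the even part of the ℤ/2-grading of Cl₄). Then X·reverse(X) = reverse(X)·X, and for every element Y of the even subalgebra of Cl₄ one has (X·reverse(X))·Y = Y·(X·reverse(X)). -/

import Mathlib

/-!
Reversal fixes `1` and the pseudoscalar `ω = e₀e₁e₂e₃` and negates every bivector `eᵢeⱼ`, so
for even `X` the element `X + X†` lies in `span {1, ω}`. Since `ω` anticommutes with every
vector, it commutes with every even element, so `span {1, ω}` is central in the even subalgebra.
Hence `X + X†` commutes with `X`, which is `X X† = X† X`; and `X X†`, being even and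
self-reverse, lies in `span {1, ω}` itself.
-/

open CliffordAlgebra

/-- The positive-definite quadratic form `Q₄(v) = v₀² + v₁² + v₂² + v₃²` on `ℝ⁴`. -/
noncomputable def Q4 : QuadraticForm ℝ (Fin 4 → ℝ) :=
  QuadraticMap.weightedSumSquares ℝ (fun _ : Fin 4 => (1 : ℝ))

/-- The generators `e i` of the Clifford algebra `Cl₄ = Cl_{4,0}`. -/
noncomputable def e (i : Fin 4) : CliffordAlgebra Q4 :=
  CliffordAlgebra.ι Q4 (Pi.single i 1)

lemma Q4_single (i : Fin 4) : Q4 (Pi.single i 1) = 1 := by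
  simp [Q4, Pi.single_apply]

lemma Q4_isOrtho_single {i j : Fin 4} (h : i ≠ j) : Q4.IsOrtho (Pi.single i 1) (Pi.single j 1) := by
  fin_cases i <;> fin_cases j <;> simp_all [QuadraticMap.IsOrtho, Q4, Fin.sum_univ_four]

@[simp] lemma e_mul_self (i : Fin 4) : e i * e i = 1 := by
  rw [e, ι_sq_scalar, Q4_single, map_one]

@[simp] lemma e_mul_e_mul_self (i : Fin 4) (x : CliffordAlgebra Q4) : e i * (e i * x) = x := by
  rw [← mul_assoc, e_mul_self, one_mul]

lemma e_mul_e_of_lt {i j : Fin 4} (h : i < j) : e j * e i = -(e i * e j) :=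
  ι_mul_ι_comm_of_isOrtho (Q4_isOrtho_single h.ne')

lemma e_mul_e_mul_of_lt {i j : Fin 4} (h : i < j) (x : CliffordAlgebra Q4) :
    e j * (e i * x) = -(e i * (e j * x)) := by
  rw [← mul_assoc, e_mul_e_of_lt h, neg_mul, mul_assoc]

@[simp] lemma reverse_e (i : Fin 4) : reverse (e i) = e i := reverse_ι _

lemma ι_eq_sum_smul_e (m : Fin 4 → ℝ) : ι Q4 m = ∑ i, m i • e i := by
  simp_rw [e, ← map_smul, ← map_sum]
  congr 1
  ext j
  simp [Pi.single_apply]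

noncomputable def pseudoscalar : CliffordAlgebra Q4 := e 0 * (e 1 * (e 2 * e 3))

lemma pseudoscalar_mul_e (i : Fin 4) : pseudoscalar * e i = -(e i * pseudoscalar) := by
  fin_cases i <;>
    simp (disch := decide) [pseudoscalar, mul_assoc, e_mul_e_of_lt, e_mul_e_mul_of_lt]

lemma reverse_pseudoscalar : reverse pseudoscalar = pseudoscalar := by
  simp (disch := decide) [pseudoscalar, mul_assoc, e_mul_e_of_lt, e_mul_e_mul_of_lt]

lemma pseudoscalar_mul_ι (m : Fin 4 → ℝ) :
    pseudoscalar * ι Q4 m = -(ι Q4 m * pseudoscalar) := by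
  simp only [ι_eq_sum_smul_e, Finset.sum_mul, Finset.mul_sum, smul_mul_assoc, mul_smul_comm,
    pseudoscalar_mul_e, smul_neg, Finset.sum_neg_distrib]

lemma commute_pseudoscalar_ι_mul_ι (m₁ m₂ : Fin 4 → ℝ) :
    Commute pseudoscalar (ι Q4 m₁ * ι Q4 m₂) := by
  rw [Commute, SemiconjBy, ← mul_assoc, pseudoscalar_mul_ι, neg_mul, mul_assoc,
    pseudoscalar_mul_ι, mul_neg, neg_neg, mul_assoc]

lemma commute_pseudoscalar_of_mem_even {Y : CliffordAlgebra Q4} (hY : Y ∈ evenOdd Q4 0) :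
    Commute pseudoscalar Y := by
  induction Y, hY using even_induction with
  | algebraMap r => exact (Algebra.commutes r pseudoscalar).symm
  | add x y _ _ hx hy => exact hx.add_right hy
  | ι_mul_ι_mul m₁ m₂ x _ hx => exact (commute_pseudoscalar_ι_mul_ι m₁ m₂).mul_right hx

noncomputable def evenSpan : Submodule ℝ (CliffordAlgebra Q4) :=
  Submodule.span ℝ {1, e 0 * e 1, e 0 * e 2, e 1 * e 2, e 0 * e 3, e 1 * e 3, e 2 * e 3,
    pseudoscalar}

lemma e_mul_e_mul_mem_evenSpan (i j : Fin 4) {x : CliffordAlgebra Q4} (hx : x ∈ evenSpan) :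
    e i * (e j * x) ∈ evenSpan := by
  induction hx using Submodule.span_induction with
  | mem y hy =>
    simp only [Set.mem_insert_iff, Set.mem_singleton_iff] at hy
    rcases hy with rfl | rfl | rfl | rfl | rfl | rfl | rfl | rfl <;>
    fin_cases i <;> fin_cases j <;>
      simp (disch := decide) only [pseudoscalar, Fin.zero_eta, Fin.mk_one, Fin.reduceFinMk,
        mul_one, mul_neg, neg_neg, e_mul_self, e_mul_e_mul_self, e_mul_e_of_lt, e_mul_e_mul_of_lt,
        Submodule.neg_mem_iff] <;>
      exact Submodule.subset_span
        (by simp only [pseudoscalar, Set.mem_insert_iff, Set.mem_singleton_iff, true_or, or_true])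
  | zero => simp
  | add y z _ _ hy hz => rw [mul_add, mul_add]; exact add_mem hy hz
  | smul r y _ hy => rw [mul_smul_comm, mul_smul_comm]; exact Submodule.smul_mem _ r hy

lemma evenOdd_zero_le_evenSpan : evenOdd Q4 0 ≤ evenSpan := by
  intro x hx
  induction x, hx using even_induction with
  | algebraMap r =>
    rw [Algebra.algebraMap_eq_smul_one]
    exact Submodule.smul_mem _ r (Submodule.subset_span (Set.mem_insert _ _))
  | add x y _ _ hx hy => exact add_mem hx hy
  | ι_mul_ι_mul m₁ m₂ x _ hx =>
    rw [mul_assoc, ι_eq_sum_smul_e m₁, ι_eq_sum_smul_e m₂, Finset.sum_mul, Finset.sum_mul]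
    refine Submodule.sum_mem _ fun i _ => ?_
    rw [smul_mul_assoc, Finset.mul_sum]
    refine Submodule.smul_mem _ _ (Submodule.sum_mem _ fun j _ => ?_)
    rw [smul_mul_assoc, mul_smul_comm]
    exact Submodule.smul_mem _ _ (e_mul_e_mul_mem_evenSpan i j hx)

lemma add_reverse_mem_span_one_pseudoscalar {X : CliffordAlgebra Q4} (hX : X ∈ evenOdd Q4 0) :
    X + reverse X ∈ Submodule.span ℝ {1, pseudoscalar} := by
  have h1 : (1 : CliffordAlgebra Q4) ∈ Submodule.span ℝ {1, pseudoscalar} :=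
    Submodule.subset_span (Set.mem_insert _ _)
  have hψ : pseudoscalar ∈ Submodule.span ℝ {1, pseudoscalar} :=
    Submodule.subset_span (Set.mem_insert_of_mem _ rfl)
  suffices evenSpan ≤ (Submodule.span ℝ {1, pseudoscalar}).comap (LinearMap.id + reverse) from
    this (evenOdd_zero_le_evenSpan hX)
  refine Submodule.span_le.2 ?_
  simp (disch := decide) only [Set.insert_subset_iff, Set.singleton_subset_iff, SetLike.mem_coe,
    Submodule.mem_comap, LinearMap.add_apply, LinearMap.id_apply, reverse.map_mul,
    reverse.map_one, reverse_e, reverse_pseudoscalar, e_mul_e_of_lt, add_neg_cancel, zero_mem,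
    true_and]
  exact ⟨add_mem h1 h1, add_mem hψ hψ⟩

lemma commute_of_mem_span_one_pseudoscalar {Z Y : CliffordAlgebra Q4}
    (hZ : Z ∈ Submodule.span ℝ {1, pseudoscalar}) (hY : Y ∈ evenOdd Q4 0) : Commute Z Y := by
  induction hZ using Submodule.span_induction with
  | mem z hz =>
    rcases hz with rfl | rfl
    · exact Commute.one_left Y
    · exact commute_pseudoscalar_of_mem_even hY
  | zero => exact Commute.zero_left Y
  | add z w _ _ hz hw => exact hz.add_left hw
  | smul r z _ hz => exact hz.smul_left r

/-- For `X` in the even subalgebra of `Cl₄`, `X·X†` is central in the even subalgebra: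
`X·X† = X†·X` and `(X·X†)·Y = Y·(X·X†)` for all even `Y`. -/
theorem mul_reverse_comm_of_even
    (X : CliffordAlgebra Q4) (hX : X ∈ CliffordAlgebra.evenOdd Q4 0) :
    X * reverse X = reverse X * X ∧
      ∀ Y ∈ CliffordAlgebra.evenOdd Q4 0,
        (X * reverse X) * Y = Y * (X * reverse X) := by
  refine ⟨?_, fun Y hY => ?_⟩
  · have h := (commute_of_mem_span_one_pseudoscalar
      (add_reverse_mem_span_one_pseudoscalar hX) hX).eq
    rw [add_mul, mul_add, add_right_inj] at h
    exact h.symm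
  · have hXXr : X * reverse X ∈ evenOdd Q4 0 :=
      (zero_add (0 : ZMod 2)) ▸ SetLike.mul_mem_graded hX ((reverse_mem_evenOdd_iff Q4).2 hX)
    have hcentral := add_reverse_mem_span_one_pseudoscalar hXXr
    rw [reverse.map_mul, reverse_reverse, ← two_smul ℝ,
      Submodule.smul_mem_iff _ two_ne_zero] at hcentral
    exact (commute_of_mem_span_one_pseudoscalar hcentral hY).eq
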